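/- There exists a continuous 2-homogeneous polynomial P : c₀ → c₀ such that P(eₙ) = 0 for all n ∈ ℕ, but P is not compact on any infinite-dimensional closed subspace: for every infinite-dimensional closed subspace M ⊆ c₀, the image under P of the closed unit ball of M is not relatively compact in c₀. One such polynomial is P(x) = (x(α(i))·x(β(i)))_{i=1}^∞, where (α,β) : ℕ → {(n,m) ∈ ℕ×ℕ : n ≠ m} is a bijection. -/
import Mathlib


open Filter Topology Metric

noncomputable section

/-- The Banach space `c₀` of real sequences converging to zero, with the sup norm. -/
abbrev c0 : Type := ZeroAtInftyContinuousMap ℕ ℝ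

/-- The unit vector basis of `c₀`. -/
def e (n : ℕ) : c0 :=
  { toFun := fun i => if i = n then (1 : ℝ) else 0
    continuous_toFun := continuous_of_discreteTopology
    zero_at_infty' := by
      rw [Filter.cocompact_eq_cofinite]
      refine tendsto_const_nhds.congr' ?_
      have h : {n}ᶜ ∈ (Filter.cofinite : Filter ℕ) := by simp [Filter.cofinite]
      filter_upwards [h] with i hi
      simp only [Set.mem_compl_iff, Set.mem_singleton_iff] at hi
      simp [hi] }

/-- A series `∑ xₙ` is weakly unconditionally Cauchy (w.u.C.) if `∑ |φ (xₙ)| < ∞` for every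
continuous linear functional `φ`. -/
def WUC {X : Type*} [NormedAddCommGroup X] [NormedSpace ℝ X] (x : ℕ → X) : Prop :=
  ∀ φ : X →L[ℝ] ℝ, Summable fun n => |φ (x n)|

/-- A sequence is equivalent to the unit vector basis of `c₀`: there are `0 < c ≤ C` with
`c · maxᵢ |aᵢ| ≤ ‖∑ aᵢ xᵢ‖ ≤ C · maxᵢ |aᵢ|` for all finite scalar families. -/
def IsEquivC0Basis {X : Type*} [NormedAddCommGroup X] [NormedSpace ℝ X] (x : ℕ → X) : Prop :=
  ∃ c C : ℝ, 0 < c ∧ c ≤ C ∧ ∀ (n : ℕ) (a : ℕ → ℝ),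
    c * (⨆ i : Fin n, |a i|) ≤ ‖∑ i ∈ Finset.range n, a i • x i‖ ∧
    ‖∑ i ∈ Finset.range n, a i • x i‖ ≤ C * (⨆ i : Fin n, |a i|)

/-- A map (polynomial) is unconditionally converging if for every w.u.C. series `∑ xₙ` the
sequence of values at the partial sums converges in norm. -/
def UCPoly {X Y : Type*} [NormedAddCommGroup X] [NormedSpace ℝ X]
    [NormedAddCommGroup Y] [NormedSpace ℝ Y] (P : X → Y) : Prop :=
  ∀ x : ℕ → X, WUC x →
    ∃ L : Y, Tendsto (fun n => P (∑ i ∈ Finset.range n, x i)) atTop (𝓝 L)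

/-- An operator is unconditionally converging if it maps w.u.C. series to unconditionally
convergent series. -/
def UCOp {X Y : Type*} [NormedAddCommGroup X] [NormedSpace ℝ X]
    [NormedAddCommGroup Y] [NormedSpace ℝ Y] (T : X → Y) : Prop :=
  ∀ x : ℕ → X, WUC x → Summable fun n => T (x n)

/-- A map (polynomial or operator) is compact if the image of the closed unit ball is
relatively norm compact. -/
def CompactMap {X Y : Type*} [NormedAddCommGroup X] [NormedSpace ℝ X]
    [NormedAddCommGroup Y] [NormedSpace ℝ Y] (P : X → Y) : Prop :=
  IsCompact (closure (P '' Metric.closedBall 0 1))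

/-- A set is relatively weakly compact if its closure in the weak topology is compact. -/
def RelWeakCompact {Y : Type*} [NormedAddCommGroup Y] [NormedSpace ℝ Y] (s : Set Y) : Prop :=
  IsCompact (closure ((toWeakSpace ℝ Y) '' s))

/-- A WUC-set is the image of the closed unit ball of `c₀` under a bounded operator. -/
def IsWUCSet {X : Type*} [NormedAddCommGroup X] [NormedSpace ℝ X] (s : Set X) : Prop :=
  ∃ T : c0 →L[ℝ] X, s = ⇑T '' Metric.closedBall 0 1

-- norm helpers
lemma c0_coord_le (f : c0) (i : ℕ) : ‖f i‖ ≤ ‖f‖ := by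
  rw [← ZeroAtInftyContinuousMap.norm_toBCF_eq_norm]
  exact f.toBCF.norm_coe_le_norm i

lemma c0_norm_le (f : c0) {C : ℝ} (hC : 0 ≤ C) (h : ∀ i, ‖f i‖ ≤ C) : ‖f‖ ≤ C := by
  rw [← ZeroAtInftyContinuousMap.norm_toBCF_eq_norm]
  exact BoundedContinuousFunction.norm_le hC |>.mpr h

-- bijection
abbrev OffDiag := {p : ℕ × ℕ // p.1 ≠ p.2}
instance : Infinite OffDiag :=
  Infinite.of_injective (fun n : ℕ => (⟨(n+1, 0), by simp⟩ : OffDiag))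
    (by intro a b h; simpa using congrArg (fun p : OffDiag => p.1.1) h)
instance : Denumerable OffDiag := Denumerable.ofEncodableOfInfinite OffDiag
def gEquiv : ℕ ≃ OffDiag := (Denumerable.eqv OffDiag).symm

def al (i : ℕ) : ℕ := (gEquiv i).1.1
def be (i : ℕ) : ℕ := (gEquiv i).1.2

lemma al_ne_be (i : ℕ) : al i ≠ be i := (gEquiv i).2
lemma ab_inj : Function.Injective fun i => (al i, be i) := by
  intro a b h
  exact gEquiv.injective (Subtype.ext h)
lemma ab_surj (p : ℕ × ℕ) (h : p.1 ≠ p.2) : ∃ i, (al i, be i) = p :=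
  ⟨gEquiv.symm ⟨p, h⟩, by simp [al, be]⟩

-- finiteness of large coords
lemma c0_finite_large (x : c0) {δ : ℝ} (hδ : 0 < δ) : {n : ℕ | δ ≤ ‖x n‖}.Finite := by
  have h := x.zero_at_infty'
  rw [Filter.cocompact_eq_cofinite, Metric.tendsto_nhds] at h
  have h2 := h δ hδ
  rw [Filter.eventually_cofinite] at h2
  refine h2.subset ?_
  intro n hn
  simp only [Set.mem_setOf_eq, not_lt] at hn ⊢
  simpa [Real.dist_eq, abs_sub_comm] using hn

def prodFun (x y : c0) : c0 :=
  { toFun := fun i => x (al i) * y (be i)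
    continuous_toFun := continuous_of_discreteTopology
    zero_at_infty' := by
      rw [Filter.cocompact_eq_cofinite, Metric.tendsto_nhds]
      intro ε hε
      rw [Filter.eventually_cofinite]
      set B := max ‖x‖ ‖y‖ + 1 with hB
      have hB0 : 0 < B := by positivity
      have hδ : 0 < ε / B := div_pos hε hB0
      have hx := c0_finite_large x hδ
      have hy := c0_finite_large y hδ
      have key : {i : ℕ | ¬ dist (x (al i) * y (be i)) 0 < ε} ⊆
          (fun i => (al i, be i)) ⁻¹' ({n | ε/B ≤ ‖x n‖} ×ˢ {n | ε/B ≤ ‖y n‖}) := by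
        intro i hi
        simp only [Set.mem_setOf_eq, Real.dist_eq, sub_zero, not_lt] at hi
        by_contra hcon
        simp only [Set.mem_preimage, Set.mem_prod, Set.mem_setOf_eq, not_and_or, not_le] at hcon
        have hxb : ‖x (al i)‖ ≤ B := (c0_coord_le x _).trans (by simp [hB]; nlinarith [le_max_left ‖x‖ ‖y‖])
        have hyb : ‖y (be i)‖ ≤ B := (c0_coord_le y _).trans (by simp [hB]; nlinarith [le_max_right ‖x‖ ‖y‖])
        have h1 : |x (al i) * y (be i)| < ε := by
          rw [abs_mul]
          simp only [Real.norm_eq_abs] at hxb hyb hcon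
          rcases hcon with hc | hc
          · nlinarith [abs_nonneg (x (al i)), abs_nonneg (y (be i)),
              div_mul_cancel₀ ε hB0.ne']
          · nlinarith [abs_nonneg (x (al i)), abs_nonneg (y (be i)),
              div_mul_cancel₀ ε hB0.ne']
        exact absurd h1 (not_lt.mpr hi)
      refine ((hx.prod hy).preimage ?_).subset key
      exact Set.injOn_of_injective ab_inj }

lemma prodFun_apply (x y : c0) (i : ℕ) : prodFun x y i = x (al i) * y (be i) := rfl

def Abil : ContinuousMultilinearMap ℝ (fun _ : Fin 2 => c0) c0 :=
  MultilinearMap.mkContinuous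
    { toFun := fun m => prodFun (m 0) (m 1)
      map_update_add' := by
        intro _inst m i x y
        fin_cases i <;> ext n <;>
          simp [prodFun_apply, Function.update_apply, ZeroAtInftyContinuousMap.add_apply] <;> ring
      map_update_smul' := by
        intro _inst m i c x
        fin_cases i <;> ext n <;>
          simp [prodFun_apply, Function.update_apply, ZeroAtInftyContinuousMap.smul_apply,
            smul_eq_mul] <;> ring }
    1 (by
      intro m
      simp only [MultilinearMap.coe_mk, one_mul]
      rw [Fin.prod_univ_two]
      apply c0_norm_le _ (by positivity)
      intro i
      rw [prodFun_apply, norm_mul]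
      exact mul_le_mul (c0_coord_le _ _) (c0_coord_le _ _) (norm_nonneg _) (norm_nonneg _))

lemma Abil_apply (x : c0) (i : ℕ) : (Abil fun _ => x) i = x (al i) * x (be i) := rfl

lemma e_apply (m j : ℕ) : e m j = if j = m then (1:ℝ) else 0 := rfl

lemma Abil_e (m : ℕ) : (Abil fun _ => e m) = 0 := by
  ext i
  have h := al_ne_be i
  rw [Abil_apply, e_apply, e_apply, ZeroAtInftyContinuousMap.zero_apply]
  by_cases h1 : al i = m <;> by_cases h2 : be i = m <;> simp [h1, h2]
  exact h (h1.trans h2.symm)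

lemma exists_unit (M : Submodule ℝ c0) (hfd : ¬ FiniteDimensional ℝ M) (N : ℕ) :
    ∃ (u : c0) (n : ℕ), u ∈ M ∧ ‖u‖ = 1 ∧ (∀ i < N, u i = 0) ∧ N ≤ n ∧ 1/2 ≤ |u n| := by
  classical
  -- coordinate projection
  let L : M →ₗ[ℝ] (Fin N → ℝ) :=
    { toFun := fun m => fun i => (m : c0) i
      map_add' := by intro a b; ext i; simp [ZeroAtInftyContinuousMap.add_apply]
      map_smul' := by intro c a; ext i; simp [ZeroAtInftyContinuousMap.smul_apply] }
  have hnotinj : ¬ Function.Injective L := fun hinj => hfd (FiniteDimensional.of_injective L hinj)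
  obtain ⟨u', hker, hne⟩ : ∃ u' : M, L u' = 0 ∧ u' ≠ 0 := by
    by_contra hcon
    push_neg at hcon
    refine hnotinj fun a b hab => ?_
    have h0 : L (a - b) = 0 := by
      have h1 := LinearMap.map_sub L a b
      rw [h1, hab, sub_self]
    exact eq_of_sub_eq_zero (hcon _ h0)
  have hu'c : (u' : c0) ≠ 0 := by
    intro h; exact hne (Subtype.ext h)
  have hnz : ‖(u' : c0)‖ ≠ 0 := norm_ne_zero_iff.mpr hu'c
  set u : c0 := ‖(u' : c0)‖⁻¹ • (u' : c0) with hu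
  have humem : u ∈ M := M.smul_mem _ u'.2
  have hunorm : ‖u‖ = 1 := by
    have h1 : ‖u‖ = ‖(‖(u' : c0)‖⁻¹ : ℝ)‖ * ‖(u' : c0)‖ := by exact norm_smul (α := ℝ) (β := c0) _ _
    rw [h1, norm_inv, norm_norm, inv_mul_cancel₀ hnz]
  have hvan : ∀ i < N, u i = 0 := by
    intro i hi
    have : (u' : c0) i = 0 := congrFun hker ⟨i, hi⟩
    rw [hu, ZeroAtInftyContinuousMap.smul_apply, this, smul_zero]
  obtain ⟨n, hn⟩ : ∃ n, 1/2 ≤ |u n| := by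
    by_contra hcon
    push_neg at hcon
    have : ‖u‖ ≤ 1/2 := c0_norm_le u (by norm_num) fun i => (le_of_lt (by simpa using hcon i))
    rw [hunorm] at this; norm_num at this
  refine ⟨u, n, humem, hunorm, hvan, ?_, hn⟩
  by_contra hlt
  push_neg at hlt
  rw [hvan n hlt] at hn
  norm_num at hn


/-- There is a continuous 2-homogeneous polynomial `P : c₀ → c₀`, given coordinatewise by
`(P x) i = x (α i) * x (β i)` for a bijection `(α, β) : ℕ → {(n, m) : n ≠ m}`, which vanishes
on the unit vector basis but is compact on no infinite-dimensional closed subspace. -/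
theorem exists_vanishing_on_basis_noncompact_on_subspaces :
    ∃ (α β : ℕ → ℕ) (A : ContinuousMultilinearMap ℝ (fun _ : Fin 2 => c0) c0),
      (∀ i : ℕ, α i ≠ β i) ∧
      (Function.Injective fun i => (α i, β i)) ∧
      (∀ p : ℕ × ℕ, p.1 ≠ p.2 → ∃ i, (α i, β i) = p) ∧
      (∀ (x : c0) (i : ℕ), (A fun _ => x) i = x (α i) * x (β i)) ∧
      (∀ n : ℕ, (A fun _ => e n) = 0) ∧
      ∀ M : Submodule ℝ c0, IsClosed (M : Set c0) → ¬ FiniteDimensional ℝ ↥M →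
        ¬ IsCompact
          (closure ((fun m : M => A fun _ => (m : c0)) '' Metric.closedBall 0 1)) := by
  refine ⟨al, be, Abil, al_ne_be, ab_inj, ab_surj, fun x i => rfl, Abil_e, ?_⟩
  intro M _hcl hfd hcompact
  choose u n hmem hnorm hvan hge hbig using exists_unit M hfd
  -- recursively defined thresholds
  set T : ℕ → ℕ := fun k => Nat.rec 0 (fun _ ih => n ih + 1) k with hT
  have hT0 : T 0 = 0 := rfl
  have hTsucc : ∀ k, T (k + 1) = n (T k) + 1 := fun k => rfl
  have hTmono : StrictMono T := by
    apply strictMono_nat_of_lt_succ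
    intro k
    rw [hTsucc]
    exact lt_of_le_of_lt (hge (T k)) (Nat.lt_succ_self _)
  -- the test vectors
  set v : ℕ → c0 := fun k => (1/2 : ℝ) • (u (T 0) + u (T (k + 1))) with hv
  have hvmem : ∀ k, v k ∈ M := fun k => M.smul_mem _ (M.add_mem (hmem _) (hmem _))
  have hvnorm : ∀ k, ‖v k‖ ≤ 1 := by
    intro k
    have h1 : ‖v k‖ = ‖(1/2 : ℝ)‖ * ‖u (T 0) + u (T (k + 1))‖ := by
      exact norm_smul (α := ℝ) (β := c0) _ _
    rw [h1]
    have h2 : ‖u (T 0) + u (T (k + 1))‖ ≤ 2 := by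
      calc ‖u (T 0) + u (T (k + 1))‖ ≤ ‖u (T 0)‖ + ‖u (T (k + 1))‖ := norm_add_le _ _
        _ = 2 := by rw [hnorm, hnorm]; norm_num
    have h3 : ‖(1/2:ℝ)‖ = 1/2 := by rw [Real.norm_eq_abs]; norm_num
    rw [h3]
    linarith
  -- coordinate computation
  have hvco : ∀ k j, v k j = (1/2 : ℝ) * (u (T 0) j + u (T (k + 1)) j) := by
    intro k j
    rw [hv]
    rw [ZeroAtInftyContinuousMap.smul_apply, ZeroAtInftyContinuousMap.add_apply]
    simp [smul_eq_mul]
  -- the sequence in the image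
  set mm : ℕ → M := fun k => ⟨v k, hvmem k⟩ with hmm
  have hmmball : ∀ k, mm k ∈ Metric.closedBall (0 : M) 1 := by
    intro k
    have hc : dist (mm k) (0 : M) = dist (v k) (0 : c0) := rfl
    show dist (mm k) (0 : M) ≤ 1
    rw [hc, dist_zero_right]
    exact hvnorm k
  set w : ℕ → c0 := fun k => Abil fun _ => v k with hw
  have hwmem : ∀ k, w k ∈ closure ((fun m : M => Abil fun _ => (m : c0)) '' Metric.closedBall 0 1) :=
    fun k => subset_closure ⟨mm k, hmmball k, rfl⟩
  -- separation
  have hsep : ∀ k j, k < j → (1/16 : ℝ) ≤ dist (w k) (w j) := by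
    intro k j hkj
    have hne : n (T 0) ≠ n (T (k + 1)) := by
      have e1 : T 1 = n (T 0) + 1 := hTsucc 0
      have h1 : n (T 0) < T 1 := by rw [e1]; exact Nat.lt_succ_self _
      have h2 : T 1 ≤ T (k + 1) := hTmono.monotone (Nat.succ_le_succ (Nat.zero_le k))
      exact Nat.ne_of_lt (lt_of_lt_of_le h1 (le_trans h2 (hge _)))
    obtain ⟨i, hi⟩ := ab_surj (n (T 0), n (T (k + 1))) hne
    have hal : al i = n (T 0) := congrArg Prod.fst hi
    have hbe : be i = n (T (k + 1)) := congrArg Prod.snd hi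
    -- vanishing facts
    have e1 : T 1 = n (T 0) + 1 := hTsucc 0
    have hlt1 : n (T 0) < T 1 := by rw [e1]; exact Nat.lt_succ_self _
    have h1 : u (T (k + 1)) (n (T 0)) = 0 := by
      apply hvan
      calc n (T 0) < T 1 := hlt1
        _ ≤ T (k + 1) := hTmono.monotone (Nat.succ_le_succ (Nat.zero_le k))
    have h1' : u (T (j + 1)) (n (T 0)) = 0 := by
      apply hvan
      calc n (T 0) < T 1 := hlt1
        _ ≤ T (j + 1) := hTmono.monotone (Nat.succ_le_succ (Nat.zero_le j))
    have e2 : T (k + 2) = n (T (k + 1)) + 1 := hTsucc (k + 1)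
    have h2 : u (T (j + 1)) (n (T (k + 1))) = 0 := by
      apply hvan
      calc n (T (k + 1)) < T (k + 2) := by rw [e2]; exact Nat.lt_succ_self _
        _ ≤ T (j + 1) := hTmono.monotone (Nat.succ_le_succ hkj)
    have hdiff : w k i - w j i =
        (1/4 : ℝ) * (u (T 0) (n (T 0)) * u (T (k + 1)) (n (T (k + 1)))) := by
      rw [hw]
      simp only [Abil_apply, hal, hbe]
      rw [hvco, hvco, hvco, hvco, h1, h1', h2]
      ring
    have hlow : (1/16 : ℝ) ≤ |w k i - w j i| := by
      rw [hdiff, abs_mul, abs_mul]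
      have h14 : |(1/4 : ℝ)| = 1/4 := by norm_num
      rw [h14]
      have b1 := hbig (T 0)
      have b2 := hbig (T (k + 1))
      have hprod := mul_le_mul b1 b2 (by norm_num) (abs_nonneg _)
      linarith
    calc (1/16 : ℝ) ≤ |w k i - w j i| := hlow
      _ = ‖(w k - w j) i‖ := by
          rw [ZeroAtInftyContinuousMap.sub_apply, Real.norm_eq_abs]
      _ ≤ ‖w k - w j‖ := c0_coord_le _ _
      _ = dist (w k) (w j) := (dist_eq_norm _ _).symm
  -- compactness contradiction
  obtain ⟨L, _, φ, hφ, hconv⟩ := hcompact.tendsto_subseq hwmem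
  have hcauchy := hconv.cauchySeq
  rw [Metric.cauchySeq_iff] at hcauchy
  obtain ⟨N, hN⟩ := hcauchy (1/16) (by norm_num)
  have hd := hN N le_rfl (N + 1) (Nat.le_succ N)
  simp only [Function.comp_apply] at hd
  have hsep' := hsep (φ N) (φ (N + 1)) (hφ (Nat.lt_succ_self N))
  linarith
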